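/- arXiv:2006.03873 — 4 statements merged into one kernel-verified Lean document; each statement's English description precedes it below -/
import Mathlib

section
/- Let μ, ε, η be real numbers with η > 0, μ > 0, and ε > μ, and let θ : ℕ → ℝ satisfy the recurrence θ(k+1) = θ(k) + η(μ+ε) if θ(k) < 0, θ(k+1) = θ(k) + ημ if θ(k) = 0, and θ(k+1) = θ(k) + η(μ−ε) if θ(k) > 0. Then for every n ∈ ℕ there exists n₀ ≥ n such that θ(n₀) > 0. -/
open Filter

theorem frequently_pos_of_add_le_succ {θ : ℕ → ℝ} {δ : ℝ} (hδ : 0 < δ)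
    (hstep : ∀ k, θ k ≤ 0 → θ k + δ ≤ θ (k + 1)) : ∃ᶠ k in atTop, 0 < θ k := by
  rw [frequently_atTop]
  intro n
  by_contra! hle
  have hgrowth : ∀ k : ℕ, θ n + k * δ ≤ θ (n + k) := by
    intro k
    induction k with
    | zero => simp
    | succ k ih =>
      rw [← add_assoc]
      push_cast
      linarith [hstep (n + k) (hle _ (Nat.le_add_right n k))]
  obtain ⟨k, hk⟩ := exists_nat_gt (-θ n / δ)
  rw [div_lt_iff₀ hδ] at hk
  linarith [hgrowth k, hle (n + k) (Nat.le_add_right n k)]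

/-- If `ε > μ > 0`, the iterates take positive values infinitely often. -/
theorem theta_pos_infinitely_often (μ ε η : ℝ) (hη : 0 < η) (hμ : 0 < μ) (hεμ : μ < ε)
    (θ : ℕ → ℝ)
    (hrec : ∀ k, θ (k + 1) =
      if θ k < 0 then θ k + η * (μ + ε)
      else if θ k = 0 then θ k + η * μ
      else θ k + η * (μ - ε)) :
    ∀ n : ℕ, ∃ n₀ ≥ n, θ n₀ > 0 := by
  have hstep : ∀ k, θ k ≤ 0 → θ k + η * μ ≤ θ (k + 1) := by
    intro k hk
    rw [hrec k]
    split_ifs with hneg hzero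
    · nlinarith
    · rfl
    · exact absurd (lt_of_le_of_ne hk hzero) hneg
  exact frequently_atTop.mp (frequently_pos_of_add_le_succ (mul_pos hη hμ) hstep)
end

section
/- Let μ, ε, η be real numbers with η > 0, μ > 0, and ε > μ, and let θ : ℕ → ℝ satisfy the recurrence θ(k+1) = θ(k) + η(μ+ε) if θ(k) < 0, θ(k+1) = θ(k) + ημ if θ(k) = 0, and θ(k+1) = θ(k) + η(μ−ε) if θ(k) > 0. Suppose n₀ < n are indices with θ(n₀) > 0, θ(n) < 0, and θ(m) ≥ 0 for all m with n₀ ≤ m < n (i.e., n is the minimum index greater than n₀ at which the sequence is negative). Then θ(n+1) > 0, and moreover for every k ≥ n, if θ(k) < 0 then θ(k+1) > 0. -/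
/-!
The property "negative values lie above `η (μ - ε)`" is invariant under the update: a negative
value reached from a positive one lies above `η (μ - ε)`, zero is sent to `η μ > 0`, and from a
negative value above `η (μ - ε)` the step `η (μ + ε)` lands above `2 η μ > 0`. A positive start
has the property, so from then on every negative value is followed by a positive one.
-/

open Set

/-- The expected update `x ↦ x + η (μ - ε · sign x)`. -/
noncomputable def expectedStep (μ ε η x : ℝ) : ℝ :=
  if x < 0 then x + η * (μ + ε)
  else if x = 0 then x + η * μ
  else x + η * (μ - ε)

section expectedStep

variable {μ ε η : ℝ}

theorem expectedStep_pos_of_neg (hη : 0 < η) (hμ : 0 < μ) {x : ℝ} (hx : x < 0)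
    (hlow : η * (μ - ε) < x) : 0 < expectedStep μ ε η x := by
  rw [expectedStep, if_pos hx]
  nlinarith

theorem mapsTo_expectedStep (hη : 0 < η) (hμ : 0 < μ) :
    MapsTo (expectedStep μ ε η) {x | x < 0 → η * (μ - ε) < x}
      {x | x < 0 → η * (μ - ε) < x} := by
  intro x hx hneg
  rcases lt_trichotomy x 0 with hx₀ | rfl | hx₀
  · exact absurd (expectedStep_pos_of_neg hη hμ hx₀ (hx hx₀)) hneg.not_gt
  · rw [expectedStep, if_neg (lt_irrefl 0), if_pos rfl] at hneg
    nlinarith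
  · rw [expectedStep, if_neg hx₀.not_gt, if_neg hx₀.ne']
    linarith

end expectedStep

theorem mem_of_recurrence {α : Type*} {f : α → α} {s : Set α} {θ : ℕ → α}
    (hθ : ∀ k, θ (k + 1) = f (θ k)) (hf : MapsTo f s s) {n₀ : ℕ} (h : θ n₀ ∈ s) :
    ∀ k ≥ n₀, θ k ∈ s := by
  intro k hk
  induction k, hk using Nat.le_induction with
  | base => exact h
  | succ k _ ih => exact hθ k ▸ hf ih

theorem next_is_pos_general (μ ε η : ℝ) (hη : 0 < η) (hμ : 0 < μ)
    (θ : ℕ → ℝ)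
    (hrec : ∀ k, θ (k + 1) =
      if θ k < 0 then θ k + η * (μ + ε)
      else if θ k = 0 then θ k + η * μ
      else θ k + η * (μ - ε))
    (n₀ n : ℕ) (hn₀n : n₀ < n) (hpos : θ n₀ > 0) (hneg : θ n < 0) :
    θ (n + 1) > 0 ∧ ∀ k ≥ n, θ k < 0 → θ (k + 1) > 0 := by
  have hlow : ∀ k ≥ n₀, θ k < 0 → η * (μ - ε) < θ k :=
    mem_of_recurrence (f := expectedStep μ ε η) hrec (mapsTo_expectedStep hη hμ)
      fun h => absurd h hpos.not_gt
  have hnext : ∀ k ≥ n, θ k < 0 → θ (k + 1) > 0 := fun k hk hk' =>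
    (hrec k).symm ▸ expectedStep_pos_of_neg hη hμ hk' (hlow k (by omega) hk')
  exact ⟨hnext n le_rfl hneg, hnext⟩

/-- Proposition 2: after the first sign change from positive to negative, every
negative parameter value is immediately followed by a positive one. -/
theorem next_is_pos (μ ε η : ℝ) (hη : 0 < η) (hμ : 0 < μ) (hεμ : μ < ε)
    (θ : ℕ → ℝ)
    (hrec : ∀ k, θ (k + 1) =
      if θ k < 0 then θ k + η * (μ + ε)
      else if θ k = 0 then θ k + η * μ
      else θ k + η * (μ - ε))
    (n₀ n : ℕ) (hn₀n : n₀ < n) (hpos : θ n₀ > 0) (hneg : θ n < 0)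
    (hmin : ∀ m, n₀ ≤ m → m < n → θ m ≥ 0) :
    θ (n + 1) > 0 ∧ ∀ k ≥ n, θ k < 0 → θ (k + 1) > 0 :=
  next_is_pos_general μ ε η hη hμ θ hrec n₀ n hn₀n hpos hneg
end

section
/- Let μ, ε, η be real numbers with η > 0, μ > 0, and ε > μ, and let θ : ℕ → ℝ satisfy the recurrence θ(k+1) = θ(k) + η(μ+ε) if θ(k) < 0, θ(k+1) = θ(k) + ημ if θ(k) = 0, and θ(k+1) = θ(k) + η(μ−ε) if θ(k) > 0. Suppose n₀ < n are indices with θ(n₀) > 0, θ(n) < 0, and θ(m) ≥ 0 for all m with n₀ ≤ m < n. Then for every k ≥ n with θ(k) < 0 it holds that θ(k) > η(μ−ε). -/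
/-! The set `{x | 0 ≤ x ∨ η(μ - ε) < x}` is invariant under the update: a negative iterate above
`η(μ - ε)` is pushed above `2ημ ≥ 0`, and a nonnegative one drops by at most `η(ε - μ)`.
The iterate just before the crossing is nonnegative, so every later iterate lies in this set. -/

open Set

/-- The update `x ↦ x + η(μ - ε·sign x)`. -/
noncomputable def expectedAdvUpdate (η μ ε x : ℝ) : ℝ :=
  if x < 0 then x + η * (μ + ε)
  else if x = 0 then x + η * μ
  else x + η * (μ - ε)

theorem mapsTo_expectedAdvUpdate {η μ : ℝ} (hη : 0 ≤ η) (hμ : 0 ≤ μ) (ε : ℝ) :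
    MapsTo (expectedAdvUpdate η μ ε) {x | 0 ≤ x ∨ η * (μ - ε) < x}
      {x | 0 ≤ x ∨ η * (μ - ε) < x} := by
  have hημ : 0 ≤ η * μ := mul_nonneg hη hμ
  rintro x hx
  simp only [mem_ofPred_eq, expectedAdvUpdate] at hx ⊢
  split_ifs with hneg hzero
  · left; rcases hx with hx | hx <;> linarith
  · left; linarith
  · right; linarith [lt_of_le_of_ne (not_lt.mp hneg) (Ne.symm hzero)]

theorem Set.MapsTo.mem_of_le {α : Type*} {f : α → α} {s : Set α} (hf : MapsTo f s s)
    {u : ℕ → α} (hu : ∀ k, u (k + 1) = f (u k)) {m : ℕ} (hm : u m ∈ s) :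
    ∀ k ≥ m, u k ∈ s := by
  intro k hk
  induction k, hk using Nat.le_induction with
  | base => exact hm
  | succ k _ ih => exact hu k ▸ hf ih

theorem neg_values_lower_bound_general (μ ε η : ℝ) (hη : 0 < η) (hμ : 0 < μ)
    (θ : ℕ → ℝ)
    (hrec : ∀ k, θ (k + 1) =
      if θ k < 0 then θ k + η * (μ + ε)
      else if θ k = 0 then θ k + η * μ
      else θ k + η * (μ - ε))
    (n₀ n : ℕ) (hn₀n : n₀ < n)
    (hmin : ∀ m, n₀ ≤ m → m < n → θ m ≥ 0) :
    ∀ k ≥ n, θ k < 0 → θ k > η * (μ - ε) := by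
  have hbefore : θ (n - 1) ≥ 0 := hmin (n - 1) (by omega) (by omega)
  intro k hk hneg
  have hinv :=
    (mapsTo_expectedAdvUpdate hη.le hμ.le ε).mem_of_le hrec (Or.inl hbefore) k (by omega)
  exact hinv.resolve_left (not_le.mpr hneg)

/-- Inductive invariant for Proposition 2: after the first crossing from positive
to negative, every subsequent negative value is bounded below by `η(μ - ε)`. -/
theorem neg_values_lower_bound (μ ε η : ℝ) (hη : 0 < η) (hμ : 0 < μ) (hεμ : μ < ε)
    (θ : ℕ → ℝ)
    (hrec : ∀ k, θ (k + 1) =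
      if θ k < 0 then θ k + η * (μ + ε)
      else if θ k = 0 then θ k + η * μ
      else θ k + η * (μ - ε))
    (n₀ n : ℕ) (hn₀n : n₀ < n) (hpos : θ n₀ > 0) (hneg : θ n < 0)
    (hmin : ∀ m, n₀ ≤ m → m < n → θ m ≥ 0) :
    ∀ k ≥ n, θ k < 0 → θ k > η * (μ - ε) :=
  neg_values_lower_bound_general μ ε η hη hμ θ hrec n₀ n hn₀n hmin
end

section
/- Let η = 1/2, ε = 3/2, μ = 1, and let r be a real number with 0 < r < 1/4. Let θ : ℕ → ℝ satisfy θ(0) = r and the recurrence θ(k+1) = θ(k) + η(μ+ε) if θ(k) < 0, θ(k+1) = θ(k) + ημ if θ(k) = 0, and θ(k+1) = θ(k) + η(μ−ε) if θ(k) > 0. Then the first six terms are θ(0) = r, θ(1) = r − 1/4, θ(2) = r + 1, θ(3) = r + 3/4, θ(4) = r + 1/2, θ(5) = r + 1/4, the sequence is periodic with θ(k+6) = θ(k) for all k, and among any six consecutive terms exactly one (the one congruent to index 1 modulo 6) is negative. -/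
/-!
With the sign function the update reads `θ ↦ θ + η (μ - ε sign θ)`; for these parameters it
moves a positive parameter down by `1/4` and a negative one up by `5/4`. From `r ∈ (0, 1/4)`
one step down makes it negative, one step up lands at `r + 1`, and since `5/4 = 5 · 1/4` four
more steps down bring it back to `r`, all of them through positive values.
-/

/-- The expected gradient step `θ ↦ θ - η ∂L/∂θ` for the adversarial linear loss, whose
gradient is `ε sign θ - μ`. -/
noncomputable def adversarialStep (η ε μ θ : ℝ) : ℝ :=
  θ + η * (μ - ε * Real.sign θ)

theorem ite_eq_adversarialStep (η ε μ θ : ℝ) :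
    (if θ < 0 then θ + η * (μ + ε)
      else if θ = 0 then θ + η * μ
      else θ + η * (μ - ε)) = adversarialStep η ε μ θ := by
  rcases lt_trichotomy θ 0 with hθ | rfl | hθ
  · simp [adversarialStep, hθ, Real.sign_of_neg hθ]
  · simp [adversarialStep]
  · simp [adversarialStep, hθ.not_gt, hθ.ne', Real.sign_of_pos hθ]

theorem adversarialStep_of_pos (η ε μ : ℝ) {θ : ℝ} (hθ : 0 < θ) :
    adversarialStep η ε μ θ = θ + η * (μ - ε) := by
  simp [adversarialStep, Real.sign_of_pos hθ]

theorem adversarialStep_of_neg (η ε μ : ℝ) {θ : ℝ} (hθ : θ < 0) :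
    adversarialStep η ε μ θ = θ + η * (μ + ε) := by
  simp [adversarialStep, Real.sign_of_neg hθ]

theorem Function.periodic_of_recurrence_of_return {α : Type*} {f : α → α} {θ : ℕ → α}
    {n : ℕ} (hrec : ∀ k, θ (k + 1) = f (θ k)) (hn : θ n = θ 0) : Function.Periodic θ n := by
  intro k
  induction k with
  | zero => simpa using hn
  | succ k ih => rw [add_right_comm, hrec, ih, hrec]

theorem Function.Periodic.apply_mod {α : Type*} {θ : ℕ → α} {n : ℕ}
    (h : Function.Periodic θ n) (k : ℕ) : θ (k % n) = θ k := by
  conv_rhs => rw [← Nat.mod_add_div' k n]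
  exact (h.nat_mul (k / n) (k % n)).symm

/-- The paper's worked example: with `η = 1/2`, `ε = 3/2`, `μ = 1`, and
`θ 0 = r` for `0 < r < 1/4`, the dynamics are 6-periodic, the first six terms are
`r, r - 1/4, r + 1, r + 3/4, r + 1/2, r + 1/4`, and a term is negative exactly
when its index is congruent to `1` modulo `6`. -/
theorem example_six_periodic (η ε μ r : ℝ) (hη : η = 1 / 2) (hε : ε = 3 / 2)
    (hμ : μ = 1) (hr : 0 < r) (hr' : r < 1 / 4)
    (θ : ℕ → ℝ) (h0 : θ 0 = r)
    (hrec : ∀ k, θ (k + 1) =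
      if θ k < 0 then θ k + η * (μ + ε)
      else if θ k = 0 then θ k + η * μ
      else θ k + η * (μ - ε)) :
    (θ 0 = r ∧ θ 1 = r - 1 / 4 ∧ θ 2 = r + 1 ∧ θ 3 = r + 3 / 4 ∧
      θ 4 = r + 1 / 2 ∧ θ 5 = r + 1 / 4) ∧
    (∀ k, θ (k + 6) = θ k) ∧
    (∀ k, θ k < 0 ↔ k % 6 = 1) := by
  subst hη hε hμ
  have hstep (k : ℕ) : θ (k + 1) = adversarialStep (1 / 2) (3 / 2) 1 (θ k) :=
    (hrec k).trans (ite_eq_adversarialStep _ _ _ _)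
  have down {k : ℕ} (h : 0 < θ k) : θ (k + 1) = θ k - 1 / 4 := by
    rw [hstep, adversarialStep_of_pos _ _ _ h]; ring
  have up {k : ℕ} (h : θ k < 0) : θ (k + 1) = θ k + 5 / 4 := by
    rw [hstep, adversarialStep_of_neg _ _ _ h]; ring
  have h1 : θ 1 = r - 1 / 4 := by rw [down (by linarith), h0]
  have h2 : θ 2 = r + 1 := by rw [up (by linarith), h1]; ring
  have h3 : θ 3 = r + 3 / 4 := by rw [down (by linarith), h2]; ring
  have h4 : θ 4 = r + 1 / 2 := by rw [down (by linarith), h3]; ring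
  have h5 : θ 5 = r + 1 / 4 := by rw [down (by linarith), h4]; ring
  have h6 : θ 6 = θ 0 := by rw [down (by linarith), h5, h0]; ring
  have hper : Function.Periodic θ 6 := Function.periodic_of_recurrence_of_return hstep h6
  refine ⟨⟨h0, h1, h2, h3, h4, h5⟩, hper, fun k => ?_⟩
  rw [← hper.apply_mod k]
  have hk : k % 6 < 6 := Nat.mod_lt k (by norm_num)
  interval_cases k % 6 <;> simp only [h0, h1, h2, h3, h4, h5] <;> norm_num <;> linarith
end
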